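/- For p ∈ K* with p ≠ 1 and any g ∈ K[t], the quantum generalized Heisenberg algebras H_q(pt, g(t)) and H_q(pt + k, g(t - k(1-p)⁻¹)) are isomorphic via t ↦ t - k(1-p)⁻¹, x ↦ x, y ↦ y (reading the second algebra's generators). -/

import Mathlib

/- STATEMENT 19: for p ∈ K*, p ≠ 1, and any g ∈ K[t], k ∈ K, the quantum
generalized Heisenberg algebras H_q(pt, g(t)) and H_q(pt + k, g(t - k(1-p)⁻¹)) are
isomorphic via t ↦ t - k(1-p)⁻¹, x ↦ x, y ↦ y (reading the second algebra's
generators). -/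

noncomputable section

open FreeAlgebra Polynomial

variable (K : Type) [Field K]

/-- Relations of `H_q(f,g)`. t = ι 0, x = ι 1, y = ι 2. -/
inductive qghRel (q : K) (f g : Polynomial K) :
    FreeAlgebra K (Fin 3) → FreeAlgebra K (Fin 3) → Prop
  | r1 : qghRel q f g (ι K (0 : Fin 3) * ι K (1 : Fin 3))
      (ι K (1 : Fin 3) * Polynomial.aeval (ι K (0 : Fin 3)) f)
  | r2 : qghRel q f g (ι K (2 : Fin 3) * ι K (0 : Fin 3))
      (Polynomial.aeval (ι K (0 : Fin 3)) f * ι K (2 : Fin 3))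
  | r3 : qghRel q f g (ι K (2 : Fin 3) * ι K (1 : Fin 3) - q • (ι K (1 : Fin 3) * ι K (2 : Fin 3)))
      (Polynomial.aeval (ι K (0 : Fin 3)) g)

/-- The quantum generalized Heisenberg algebra `H_q(f,g)`. -/
abbrev QGH (q : K) (f g : Polynomial K) := RingQuot (qghRel K q f g)

/-- Generators of `H_q(f,g)`. -/
def qghGen (q : K) (f g : Polynomial K) (i : Fin 3) : QGH K q f g :=
  RingQuot.mkAlgHom K (qghRel K q f g) (ι K i)

/-! For any `c : K`, the substitution `t ↦ t - c`, `x ↦ x`, `y ↦ y` carries the relations of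
`H_q(f, g)` to those of `H_q(f(t - c) + c, g(t - c))`, because `(t - c) x = x (f(t - c) + c) - c x`
and `c` is central; the substitution with `-c` is its inverse. For `f = pt` the shifted polynomial
`p(t - c) + c` equals `pt + k` exactly when `c = k(1 - p)⁻¹`, the fixed point of `t ↦ pt + k`. -/

section QuantumHeisenberg

variable {K}

namespace QGH

variable {q : K} {f g : Polynomial K}

theorem t_mul_x :
    qghGen K q f g 0 * qghGen K q f g 1 = qghGen K q f g 1 * aeval (qghGen K q f g 0) f := by
  simpa only [qghGen, map_mul, ← aeval_algHom_apply] using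
    RingQuot.mkAlgHom_rel K (qghRel.r1 (q := q) (f := f) (g := g))

theorem y_mul_t :
    qghGen K q f g 2 * qghGen K q f g 0 = aeval (qghGen K q f g 0) f * qghGen K q f g 2 := by
  simpa only [qghGen, map_mul, ← aeval_algHom_apply] using
    RingQuot.mkAlgHom_rel K (qghRel.r2 (q := q) (f := f) (g := g))

theorem y_mul_x_sub :
    qghGen K q f g 2 * qghGen K q f g 1 - q • (qghGen K q f g 1 * qghGen K q f g 2) =
      aeval (qghGen K q f g 0) g := by
  simpa only [qghGen, map_sub, map_smul, map_mul, ← aeval_algHom_apply] using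
    RingQuot.mkAlgHom_rel K (qghRel.r3 (q := q) (f := f) (g := g))

section Lift

variable {A : Type*} [Ring A] [Algebra K A]

def lift (t x y : A) (htx : t * x = x * aeval t f) (hyt : y * t = aeval t f * y)
    (hyx : y * x - q • (x * y) = aeval t g) : QGH K q f g →ₐ[K] A :=
  RingQuot.liftAlgHom K ⟨FreeAlgebra.lift K ![t, x, y], by
    rintro _ _ (_ | _ | _) <;>
      simpa only [map_sub, map_smul, map_mul, ← aeval_algHom_apply, FreeAlgebra.lift_ι_apply]⟩

@[simp]
theorem lift_gen (t x y : A) (htx : t * x = x * aeval t f) (hyt : y * t = aeval t f * y)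
    (hyx : y * x - q • (x * y) = aeval t g) (i : Fin 3) :
    lift t x y htx hyt hyx (qghGen K q f g i) = ![t, x, y] i := by
  simp [lift, qghGen]

theorem algHom_ext {φ ψ : QGH K q f g →ₐ[K] A}
    (h : ∀ i, φ (qghGen K q f g i) = ψ (qghGen K q f g i)) : φ = ψ :=
  RingQuot.ringQuot_ext' K _ _ (FreeAlgebra.hom_ext (funext h))

end Lift

variable {f' g' : Polynomial K} (c : K)

def shiftHom (hf : f' = f.comp (X - C c) + C c) (hg : g' = g.comp (X - C c)) :
    QGH K q f g →ₐ[K] QGH K q f' g' :=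
  lift (qghGen K q f' g' 0 - algebraMap K _ c) (qghGen K q f' g' 1) (qghGen K q f' g' 2)
    (by
      subst hf
      rw [sub_mul, t_mul_x, Algebra.commutes]
      simp [aeval_comp, mul_add])
    (by
      subst hf
      rw [mul_sub, y_mul_t, ← Algebra.commutes]
      simp [aeval_comp, add_mul])
    (by subst hg; simp [y_mul_x_sub, aeval_comp])

def shiftEquiv (hf : f' = f.comp (X - C c) + C c) (hg : g' = g.comp (X - C c)) :
    QGH K q f g ≃ₐ[K] QGH K q f' g' :=
  AlgEquiv.ofAlgHom (shiftHom c hf hg)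
    (shiftHom (-c) (by simp [hf, add_comp, comp_assoc]) (by simp [hg, comp_assoc]))
    (algHom_ext fun i => by fin_cases i <;> simp [shiftHom])
    (algHom_ext fun i => by fin_cases i <;> simp [shiftHom])

theorem shiftEquiv_gen (hf : f' = f.comp (X - C c) + C c) (hg : g' = g.comp (X - C c)) :
    shiftEquiv c hf hg (qghGen K q f g 0) = qghGen K q f' g' 0 - algebraMap K _ c ∧
      shiftEquiv c hf hg (qghGen K q f g 1) = qghGen K q f' g' 1 ∧
      shiftEquiv c hf hg (qghGen K q f g 2) = qghGen K q f' g' 2 :=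
  ⟨lift_gen .., lift_gen .., lift_gen ..⟩

end QGH

theorem C_mul_X_add_C_eq_comp_sub_C_add_C {p : K} (hp : p ≠ 1) (k : K) :
    C p * X + C k = (C p * X).comp (X - C (k * (1 - p)⁻¹)) + C (k * (1 - p)⁻¹) := by
  set c := k * (1 - p)⁻¹ with hc
  have hk : C k = C c - C p * C c := by
    rw [← C_mul, ← C_sub, hc, ← one_sub_mul, mul_comm,
      inv_mul_cancel_right₀ (sub_ne_zero.2 hp.symm)]
  rw [hk, mul_comp, C_comp, X_comp]
  ring

end QuantumHeisenberg

theorem stmt19 (q p k : K) (hp1 : p ≠ 1) (g : Polynomial K) :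
    letI f₁ : Polynomial K := C p * X
    letI f₂ : Polynomial K := C p * X + C k
    letI g₂ : Polynomial K := g.comp (X - C (k * (1 - p)⁻¹))
    ∃ ψ : QGH K q f₁ g ≃ₐ[K] QGH K q f₂ g₂,
      ψ (qghGen K q f₁ g 0) = qghGen K q f₂ g₂ 0 - (k * (1 - p)⁻¹) • 1 ∧
      ψ (qghGen K q f₁ g 1) = qghGen K q f₂ g₂ 1 ∧
      ψ (qghGen K q f₁ g 2) = qghGen K q f₂ g₂ 2 := by
  have hf := C_mul_X_add_C_eq_comp_sub_C_add_C hp1 k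
  refine ⟨QGH.shiftEquiv _ hf rfl, ?_⟩
  rw [← Algebra.algebraMap_eq_smul_one]
  exact QGH.shiftEquiv_gen _ hf rfl

end
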